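/- Let A be a positively graded finite-dimensional algebra over an algebraically closed field K such that λ ↦ λ' is an involution on Λ₀, where each graded projective cover P^λ = ⊕_{i=0}^{d_λ} P^λ_i with P^λ_{d_λ} ≠ 0. For λ, μ ∈ Λ₀ and a nonzero homogeneous homomorphism f ∈ Hom_A(P^λ, P^μ) of degree j, there exist homogeneous g ∈ Hom_A(P^μ, P^{λ'}) of degree d_{λ'} − j and homogeneous h ∈ Hom_A(P^{μ'}, P^λ) of degree d_μ − j such that g∘f = θ_λ and f∘h = θ_{μ'}. -/

import Mathlib

/-!
As `P^λ` has simple top and `θ_λ` has simple image, `ker θ_λ` is the unique maximal submodule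
`rad P^λ`, which contains `ker f` because `f ≠ 0`; so `θ_λ` factors through `f`, and injectivity
of `P^{λ'}` extends the factorisation to `P^μ`. Dually, `soc P^μ ≅ L^{μ'}` is simple, hence lies in
the nonzero submodule `im f`, and projectivity of `P^{μ'}` lifts `θ_{μ'}` along `f`. Finally, as
`f` and the `θ`'s are homogeneous, the degree `d_{λ'} - j` (resp. `d_μ - j`) component of the map
obtained still satisfies the identity.
-/

/-- The socle of a module: the largest semisimple submodule. -/
def Socle (A M : Type) [Ring A] [AddCommGroup M] [Module A M] : Submodule A M :=
  ⨆ (p : Submodule A M) (_ : IsSimpleModule A ↥p), p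

/-- The radical of a module: the intersection of all maximal submodules. -/
def Rad (A M : Type) [Ring A] [AddCommGroup M] [Module A M] : Submodule A M :=
  sInf {p : Submodule A M | IsCoatom p}

/-- `f` is a homogeneous map of degree `j` with respect to the gradings `ℳ`, `𝒩`. -/
def IsHomogMap {K M N : Type} [Field K] [AddCommGroup M] [Module K M]
    [AddCommGroup N] [Module K N]
    (ℳ : ℤ → Submodule K M) (𝒩 : ℤ → Submodule K N) (j : ℤ) (f : M → N) : Prop :=
  ∀ i : ℤ, ∀ m ∈ ℳ i, f m ∈ 𝒩 (i + j)

open DirectSum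

section Graded

variable {K A M N O : Type} [Field K] [Ring A] [Algebra K A]
  [AddCommGroup M] [Module K M] [Module A M] [IsScalarTower K A M]
  [AddCommGroup N] [Module K N] [Module A N] [IsScalarTower K A N]
  [AddCommGroup O] [Module K O] [Module A O] [IsScalarTower K A O]
  {ℳ : ℤ → Submodule K M} {𝒩 : ℤ → Submodule K N} {𝒪 : ℤ → Submodule K O}
  [Decomposition ℳ] [Decomposition 𝒩] [Decomposition 𝒪]

theorem coe_decompose_map_add_of_isHomogMap {F : Type} [FunLike F M N] [AddMonoidHomClass F M N]
    {φ : F} {j : ℤ} (hφ : IsHomogMap ℳ 𝒩 j φ) (z : M) (s : ℤ) :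
    (decompose 𝒩 (φ z) (s + j) : N) = φ (decompose ℳ z s) := by
  induction z using Decomposition.inductionOn ℳ with
  | zero => simp
  | add u v hu hv =>
    simp only [map_add, decompose_add, DirectSum.add_apply, Submodule.coe_add, hu, hv]
  | @homogeneous t x =>
    obtain ⟨x, hx⟩ := x
    by_cases hst : t = s
    · subst hst
      rw [decompose_of_mem_same 𝒩 (hφ t x hx), decompose_of_mem_same ℳ hx]
    · rw [decompose_of_mem_ne 𝒩 (hφ t x hx) (by omega), decompose_of_mem_ne ℳ hx hst, map_zero]

variable (ℳ 𝒩) in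
/-- The part of a `K`-linear map between graded spaces that raises degrees by `δ`. -/
def homogComponentₗ (g : M →ₗ[K] N) (δ : ℤ) : M →ₗ[K] N :=
  toModule K ℤ N (fun i ↦ (𝒩 (i + δ)).subtype ∘ₗ component K ℤ (fun t ↦ 𝒩 t) (i + δ) ∘ₗ
      (decomposeLinearEquiv 𝒩).toLinearMap ∘ₗ g ∘ₗ (ℳ i).subtype) ∘ₗ
    (decomposeLinearEquiv ℳ).toLinearMap

theorem homogComponentₗ_apply_of_mem (g : M →ₗ[K] N) (δ : ℤ) {i : ℤ} {x : M} (hx : x ∈ ℳ i) :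
    homogComponentₗ ℳ 𝒩 g δ x = decompose 𝒩 (g x) (i + δ) := by
  change toModule K ℤ N _ (decompose ℳ x) = _
  rw [decompose_of_mem ℳ hx, ← lof_eq_of K, toModule_lof]
  rfl

theorem linearMap_ext_of_homogeneous {f g : M →ₗ[A] N}
    (h : ∀ i, ∀ x ∈ ℳ i, f x = g x) : f = g :=
  LinearMap.restrictScalars_injective K <|
    decompose_lhom_ext ℳ fun i ↦ LinearMap.ext fun x ↦ h i x x.2

theorem homogComponentₗ_map_smul (𝒜 : ℤ → Submodule K A) [Decomposition 𝒜]
    [SetLike.GradedSMul 𝒜 ℳ] [SetLike.GradedSMul 𝒜 𝒩]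
    (g : M →ₗ[A] N) (δ : ℤ) (a : A) (x : M) :
    homogComponentₗ ℳ 𝒩 (g.restrictScalars K) δ (a • x) =
      a • homogComponentₗ ℳ 𝒩 (g.restrictScalars K) δ x := by
  induction x using Decomposition.inductionOn ℳ with
  | zero => simp
  | add x y hx hy => simp only [smul_add, map_add, hx, hy]
  | @homogeneous i x =>
    induction a using Decomposition.inductionOn 𝒜 with
    | zero => simp
    | add a b ha hb => simp only [add_smul, map_add, ha, hb]
    | @homogeneous k a =>
      have hsmul : IsHomogMap 𝒩 𝒩 k (DistribSMul.toAddMonoidHom N (a : A)) :=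
        fun t y hy ↦ add_comm k t ▸ SetLike.GradedSMul.smul_mem a.2 hy
      rw [homogComponentₗ_apply_of_mem _ _ (SetLike.GradedSMul.smul_mem a.2 x.2),
        homogComponentₗ_apply_of_mem _ _ x.2, LinearMap.restrictScalars_apply, map_smul,
        vadd_eq_add, show k + i + δ = i + δ + k by ring]
      exact coe_decompose_map_add_of_isHomogMap hsmul _ _

section

variable (𝒜 : ℤ → Submodule K A) [Decomposition 𝒜] [SetLike.GradedSMul 𝒜 ℳ]
  [SetLike.GradedSMul 𝒜 𝒩] [SetLike.GradedSMul 𝒜 𝒪]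

variable (ℳ 𝒩) in
def homogComponent (g : M →ₗ[A] N) (δ : ℤ) : M →ₗ[A] N :=
  { homogComponentₗ ℳ 𝒩 (g.restrictScalars K) δ with
    map_smul' := homogComponentₗ_map_smul 𝒜 g δ }

theorem homogComponent_apply_of_mem (g : M →ₗ[A] N) (δ : ℤ) {i : ℤ} {x : M} (hx : x ∈ ℳ i) :
    homogComponent ℳ 𝒩 𝒜 g δ x = decompose 𝒩 (g x) (i + δ) :=
  homogComponentₗ_apply_of_mem _ δ hx

theorem isHomogMap_homogComponent (g : M →ₗ[A] N) (δ : ℤ) :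
    IsHomogMap ℳ 𝒩 δ (homogComponent ℳ 𝒩 𝒜 g δ) := fun i x hx ↦ by
  rw [homogComponent_apply_of_mem 𝒜 g δ hx]
  exact SetLike.coe_mem _

theorem homogComponent_eq_self {g : M →ₗ[A] N} {δ : ℤ} (hg : IsHomogMap ℳ 𝒩 δ g) :
    homogComponent ℳ 𝒩 𝒜 g δ = g :=
  linearMap_ext_of_homogeneous fun i x hx ↦ by
    rw [homogComponent_apply_of_mem 𝒜 g δ hx, decompose_of_mem_same 𝒩 (hg i x hx)]

theorem homogComponent_comp_of_isHomogMap_right {f : M →ₗ[A] N} {j : ℤ}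
    (hf : IsHomogMap ℳ 𝒩 j f) (g : N →ₗ[A] O) (δ : ℤ) :
    homogComponent ℳ 𝒪 𝒜 (g ∘ₗ f) (j + δ) = homogComponent 𝒩 𝒪 𝒜 g δ ∘ₗ f :=
  linearMap_ext_of_homogeneous fun i x hx ↦ by
    rw [LinearMap.comp_apply, homogComponent_apply_of_mem 𝒜 g δ (hf i x hx),
      homogComponent_apply_of_mem 𝒜 _ _ hx, LinearMap.comp_apply, add_assoc]

theorem homogComponent_comp_of_isHomogMap_left {f : N →ₗ[A] O} {j : ℤ}
    (hf : IsHomogMap 𝒩 𝒪 j f) (h : M →ₗ[A] N) (δ : ℤ) :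
    homogComponent ℳ 𝒪 𝒜 (f ∘ₗ h) (δ + j) = f ∘ₗ homogComponent ℳ 𝒩 𝒜 h δ :=
  linearMap_ext_of_homogeneous fun i x hx ↦ by
    rw [LinearMap.comp_apply, homogComponent_apply_of_mem 𝒜 h δ hx,
      homogComponent_apply_of_mem 𝒜 _ _ hx, LinearMap.comp_apply, ← add_assoc]
    exact coe_decompose_map_add_of_isHomogMap hf _ _

end

theorem IsHomogMap.exists_homog_comp_eq_of_comp_eq (𝒜 : ℤ → Submodule K A) [Decomposition 𝒜]
    [SetLike.GradedSMul 𝒜 ℳ] [SetLike.GradedSMul 𝒜 𝒩] [SetLike.GradedSMul 𝒜 𝒪]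
    {f : M →ₗ[A] N} {j : ℤ} (hf : IsHomogMap ℳ 𝒩 j f)
    {θ : M →ₗ[A] O} {δ : ℤ} (hθ : IsHomogMap ℳ 𝒪 δ θ)
    {g : N →ₗ[A] O} (hg : g ∘ₗ f = θ) :
    ∃ g' : N →ₗ[A] O, IsHomogMap 𝒩 𝒪 (δ - j) g' ∧ g' ∘ₗ f = θ := by
  refine ⟨homogComponent 𝒩 𝒪 𝒜 g (δ - j), isHomogMap_homogComponent 𝒜 g _, ?_⟩
  rw [← homogComponent_comp_of_isHomogMap_right 𝒜 hf, hg, add_sub_cancel,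
    homogComponent_eq_self 𝒜 hθ]

theorem IsHomogMap.exists_comp_homog_eq_of_comp_eq (𝒜 : ℤ → Submodule K A) [Decomposition 𝒜]
    [SetLike.GradedSMul 𝒜 ℳ] [SetLike.GradedSMul 𝒜 𝒩] [SetLike.GradedSMul 𝒜 𝒪]
    {f : N →ₗ[A] O} {j : ℤ} (hf : IsHomogMap 𝒩 𝒪 j f)
    {θ : M →ₗ[A] O} {δ : ℤ} (hθ : IsHomogMap ℳ 𝒪 δ θ)
    {h : M →ₗ[A] N} (hh : f ∘ₗ h = θ) :
    ∃ h' : M →ₗ[A] N, IsHomogMap ℳ 𝒩 (δ - j) h' ∧ f ∘ₗ h' = θ := by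
  refine ⟨homogComponent ℳ 𝒩 𝒜 h (δ - j), isHomogMap_homogComponent 𝒜 h _, ?_⟩
  rw [← homogComponent_comp_of_isHomogMap_left 𝒜 hf, hh, sub_add_cancel,
    homogComponent_eq_self 𝒜 hθ]

end Graded

section Modules

variable {A M N Q : Type} [Ring A] [AddCommGroup M] [Module A M] [AddCommGroup N] [Module A N]
  [AddCommGroup Q] [Module A Q]

theorem isCoatom_ker_of_isSimpleModule_range (f : M →ₗ[A] N)
    [IsSimpleModule A (LinearMap.range f)] : IsCoatom (LinearMap.ker f) :=
  LinearMap.ker_rangeRestrict f ▸ LinearMap.isCoatom_ker_of_surjective f.surjective_rangeRestrict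

theorem le_rad_of_ne_top [IsCoatomic (Submodule A M)] (hrad : IsCoatom (Rad A M))
    {N : Submodule A M} (hN : N ≠ ⊤) : N ≤ Rad A M := by
  obtain ⟨c, hc, hNc⟩ := (eq_top_or_exists_le_coatom N).resolve_left hN
  have hc_eq : c = Rad A M := (hrad.le_iff.mp (sInf_le hc)).resolve_left hc.1
  exact hc_eq ▸ hNc

theorem le_socle_of_isSimpleModule (N : Submodule A M) [IsSimpleModule A N] : N ≤ Socle A M :=
  le_iSup₂_of_le (f := fun (p : Submodule A M) (_ : IsSimpleModule A p) ↦ p) N ‹_› le_rfl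

theorem socle_le_of_ne_bot [IsAtomic (Submodule A M)] (hsoc : IsSimpleModule A (Socle A M))
    {N : Submodule A M} (hN : N ≠ ⊥) : Socle A M ≤ N := by
  obtain ⟨a, ha, haN⟩ := (eq_bot_or_exists_atom_le N).resolve_left hN
  have : IsSimpleModule A a := isSimpleModule_iff_isAtom.mpr ha
  have ha_eq : a = Socle A M :=
    ((isSimpleModule_iff_isAtom.mp hsoc).le_iff.mp
      (le_socle_of_isSimpleModule a)).resolve_left ha.1
  exact ha_eq ▸ haN

theorem exists_comp_eq_of_ker_le [Module.Injective A Q] (f : M →ₗ[A] N) (θ : M →ₗ[A] Q)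
    (h : LinearMap.ker f ≤ LinearMap.ker θ) : ∃ g : N →ₗ[A] Q, g ∘ₗ f = θ := by
  obtain ⟨g, hg⟩ := Module.Injective.extension_property A Q _ _ (LinearMap.range f).subtype
    (Submodule.injective_subtype _)
    ((LinearMap.ker f).liftQ θ h ∘ₗ f.quotKerEquivRange.symm.toLinearMap)
  refine ⟨g, LinearMap.ext fun x ↦ ?_⟩
  have := congr($hg ⟨f x, LinearMap.mem_range_self f x⟩)
  simpa [LinearMap.quotKerEquivRange_symm_apply_image] using this

theorem exists_comp_eq_of_range_le [Module.Projective A Q] (f : M →ₗ[A] N) (θ : Q →ₗ[A] N)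
    (h : LinearMap.range θ ≤ LinearMap.range f) : ∃ g : Q →ₗ[A] M, f ∘ₗ g = θ := by
  obtain ⟨g, hg⟩ := Module.projective_lifting_property f.rangeRestrict
    (θ.codRestrict _ fun x ↦ h (LinearMap.mem_range_self θ x)) f.surjective_rangeRestrict
  exact ⟨g, LinearMap.ext fun x ↦ congr(($hg x : N))⟩

theorem exists_comp_eq_of_isCoatom_rad [IsCoatomic (Submodule A M)] [Module.Injective A Q]
    (hrad : IsCoatom (Rad A M)) {f : M →ₗ[A] N} (hf : f ≠ 0) {θ : M →ₗ[A] Q}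
    (hθ : IsCoatom (LinearMap.ker θ)) : ∃ g : N →ₗ[A] Q, g ∘ₗ f = θ := by
  have hkerθ : LinearMap.ker θ = Rad A M :=
    ((hθ.le_iff.mp (le_rad_of_ne_top hrad hθ.1)).resolve_left hrad.1).symm
  refine exists_comp_eq_of_ker_le f θ (hkerθ ▸ le_rad_of_ne_top hrad ?_)
  exact fun h ↦ hf (LinearMap.ker_eq_top.mp h)

theorem exists_comp_eq_of_isSimpleModule_socle [IsAtomic (Submodule A N)] [Module.Projective A Q]
    (hsoc : IsSimpleModule A (Socle A N)) {f : M →ₗ[A] N} (hf : f ≠ 0) {θ : Q →ₗ[A] N}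
    (hθ : LinearMap.range θ ≤ Socle A N) : ∃ h : Q →ₗ[A] M, f ∘ₗ h = θ :=
  exists_comp_eq_of_range_le f θ <|
    hθ.trans <| socle_le_of_ne_bot hsoc fun h ↦ hf (LinearMap.range_eq_bot.mp h)

end Modules

theorem stmt_6_general
    (K A : Type) [Field K] [Ring A] [Algebra K A]
    -- positive grading on A
    (𝒜 : ℤ → Submodule K A)
    (hA : DirectSum.IsInternal 𝒜)
    (Lam : Type) (L P : Lam → Type)
    [∀ l, AddCommGroup (L l)] [∀ l, Module A (L l)]
    [∀ l, AddCommGroup (P l)] [∀ l, Module A (P l)] [∀ l, Module K (P l)]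
    [∀ l, IsScalarTower K A (P l)] [∀ l, FiniteDimensional K (P l)]
    (hsimple : ∀ l, IsSimpleModule A (L l))
    (hproj : ∀ l, Module.Projective A (P l))
    (hcover : ∀ l, ∃ π : P l →ₗ[A] L l, Function.Surjective π ∧ LinearMap.ker π = Rad A (P l))
    -- gradings on the projective covers, supported in degrees 0..d l
    (d : Lam → ℤ)
    (Pgr : ∀ l, ℤ → Submodule K (P l))
    (hP : ∀ l, DirectSum.IsInternal (Pgr l))
    (hPsmul : ∀ l, ∀ i j : ℤ, ∀ a ∈ 𝒜 i, ∀ x ∈ Pgr l j, a • x ∈ Pgr l (i + j))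
    -- the map ' on Λ₀, an involution, with soc(P^λ) ≅ L^{λ'}
    (pr : Lam → Lam)
    (hpr : ∀ l, Module.Injective A (P l) → Nonempty (↥(Socle A (P l)) ≃ₗ[A] L (pr l)))
    (hprinj : ∀ l, Module.Injective A (P l) → Module.Injective A (P (pr l)))
    (hprinv : ∀ l, Module.Injective A (P l) → pr (pr l) = l)
    -- the fixed maps θ_λ with image soc(P^{λ'}), homogeneous of degree d_{λ'}
    (θ : ∀ l, P l →ₗ[A] P (pr l))
    (hθ : ∀ l, Module.Injective A (P l) → LinearMap.range (θ l) = Socle A (P (pr l)))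
    (hθhom : ∀ l, Module.Injective A (P l) →
      IsHomogMap (Pgr l) (Pgr (pr l)) (d (pr l)) (θ l))
    (l m : Lam) (hl : Module.Injective A (P l)) (hm : Module.Injective A (P m))
    (j : ℤ) (f : P l →ₗ[A] P m) (hf : f ≠ 0)
    (hfhom : IsHomogMap (Pgr l) (Pgr m) j f) :
    (∃ g : P m →ₗ[A] P (pr l),
      IsHomogMap (Pgr m) (Pgr (pr l)) (d (pr l) - j) g ∧ g.comp f = θ l) ∧
    (∃ h : P (pr m) →ₗ[A] P l,
      IsHomogMap (Pgr (pr m)) (Pgr l) (d m - j) h ∧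
      ∀ x : P (pr m), f (h x) = cast (congrArg P (hprinv m hm)) (θ (pr m) x)) := by
  let _ := hA.chooseDecomposition
  let _ := fun n ↦ (hP n).chooseDecomposition
  have : ∀ n, SetLike.GradedSMul 𝒜 (Pgr n) := fun n ↦
    ⟨fun i k a x ha hx ↦ hPsmul n i k a ha x hx⟩
  have : ∀ n, IsNoetherian A (P n) := fun n ↦ isNoetherian_of_tower K inferInstance
  have : ∀ n, IsArtinian A (P n) := fun n ↦ isArtinian_of_tower K inferInstance
  have hsocle : ∀ n, Module.Injective A (P n) → IsSimpleModule A (Socle A (P n)) := fun n hn ↦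
    have := hsimple (pr n); IsSimpleModule.congr (hpr n hn).some
  constructor
  · obtain ⟨π, hπ, hker⟩ := hcover l
    have hrad : IsCoatom (Rad A (P l)) :=
      have := hsimple l; hker ▸ LinearMap.isCoatom_ker_of_surjective hπ
    have : IsSimpleModule A (LinearMap.range (θ l)) :=
      hθ l hl ▸ hsocle (pr l) (hprinj l hl)
    have : Module.Injective A (P (pr l)) := hprinj l hl
    obtain ⟨g, hg⟩ :=
      exists_comp_eq_of_isCoatom_rad hrad hf (isCoatom_ker_of_isSimpleModule_range (θ l))
    exact hfhom.exists_homog_comp_eq_of_comp_eq 𝒜 (hθhom l hl) hg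
  · -- `θ (pr m)` lands in `P (pr (pr m))`; generalizing `pr (pr m)` makes the cast disappear.
    suffices key : ∀ n (e : n = m) (θ' : P (pr m) →ₗ[A] P n),
        LinearMap.range θ' = Socle A (P n) → IsHomogMap (Pgr (pr m)) (Pgr n) (d n) θ' →
        ∃ h : P (pr m) →ₗ[A] P l, IsHomogMap (Pgr (pr m)) (Pgr l) (d m - j) h ∧
          ∀ x, f (h x) = cast (congrArg P e) (θ' x) from
      key _ (hprinv m hm) _ (hθ (pr m) (hprinj m hm)) (hθhom (pr m) (hprinj m hm))
    intro n e θ' hrange hhom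
    subst n
    have : Module.Projective A (P (pr m)) := hproj (pr m)
    obtain ⟨h, hh⟩ := exists_comp_eq_of_isSimpleModule_socle (hsocle m hm) hf hrange.le
    obtain ⟨h', hh'hom, hh'⟩ := hfhom.exists_comp_homog_eq_of_comp_eq 𝒜 hhom hh
    exact ⟨h', hh'hom, fun x ↦ congr($hh' x)⟩

/-- Graded version of Statement 1.  For a positively graded finite-dimensional
algebra `A` with `λ ↦ λ'` an involution on `Λ₀`, graded projective covers
`P^λ = ⊕_{i=0}^{d_λ} P^λ_i` with `P^λ_{d_λ} ≠ 0`, and a nonzero homogeneous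
`f ∈ Hom_A(P^λ, P^μ)` of degree `j`, there exist homogeneous `g ∈ Hom_A(P^μ, P^{λ'})` of
degree `d_{λ'} − j` and homogeneous `h ∈ Hom_A(P^{μ'}, P^λ)` of degree `d_μ − j` with
`g ∘ f = θ_λ` and `f ∘ h = θ_{μ'}`. -/
theorem stmt_6
    (K A : Type) [Field K] [IsAlgClosed K] [Ring A] [Algebra K A] [FiniteDimensional K A]
    -- positive grading on A
    (𝒜 : ℤ → Submodule K A)
    (hA : DirectSum.IsInternal 𝒜)
    (hA1 : (1 : A) ∈ 𝒜 0)
    (hAmul : ∀ i j : ℤ, ∀ a ∈ 𝒜 i, ∀ b ∈ 𝒜 j, a * b ∈ 𝒜 (i + j))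
    (hApos : ∀ i : ℤ, i < 0 → 𝒜 i = ⊥)
    (Lam : Type) (L P : Lam → Type)
    [∀ l, AddCommGroup (L l)] [∀ l, Module A (L l)] [∀ l, Module K (L l)]
    [∀ l, IsScalarTower K A (L l)] [∀ l, FiniteDimensional K (L l)]
    [∀ l, AddCommGroup (P l)] [∀ l, Module A (P l)] [∀ l, Module K (P l)]
    [∀ l, IsScalarTower K A (P l)] [∀ l, FiniteDimensional K (P l)]
    (hsimple : ∀ l, IsSimpleModule A (L l))
    (hdistinct : ∀ l m, Nonempty (L l ≃ₗ[A] L m) → l = m)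
    (hproj : ∀ l, Module.Projective A (P l))
    (hcover : ∀ l, ∃ π : P l →ₗ[A] L l, Function.Surjective π ∧ LinearMap.ker π = Rad A (P l))
    -- gradings on the projective covers, supported in degrees 0..d l
    (d : Lam → ℤ) (hd : ∀ l, 0 ≤ d l)
    (Pgr : ∀ l, ℤ → Submodule K (P l))
    (hP : ∀ l, DirectSum.IsInternal (Pgr l))
    (hPsmul : ∀ l, ∀ i j : ℤ, ∀ a ∈ 𝒜 i, ∀ x ∈ Pgr l j, a • x ∈ Pgr l (i + j))
    (hPsupp : ∀ l, ∀ i : ℤ, (i < 0 ∨ d l < i) → Pgr l i = ⊥)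
    (hPtop : ∀ l, Pgr l (d l) ≠ ⊥)
    -- the map ' on Λ₀, an involution, with soc(P^λ) ≅ L^{λ'}
    (pr : Lam → Lam)
    (hpr : ∀ l, Module.Injective A (P l) → Nonempty (↥(Socle A (P l)) ≃ₗ[A] L (pr l)))
    (hprinj : ∀ l, Module.Injective A (P l) → Module.Injective A (P (pr l)))
    (hprinv : ∀ l, Module.Injective A (P l) → pr (pr l) = l)
    -- the fixed maps θ_λ with image soc(P^{λ'}), homogeneous of degree d_{λ'}
    (θ : ∀ l, P l →ₗ[A] P (pr l))
    (hθ : ∀ l, Module.Injective A (P l) → LinearMap.range (θ l) = Socle A (P (pr l)))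
    (hθhom : ∀ l, Module.Injective A (P l) →
      IsHomogMap (Pgr l) (Pgr (pr l)) (d (pr l)) (θ l))
    (l m : Lam) (hl : Module.Injective A (P l)) (hm : Module.Injective A (P m))
    (j : ℤ) (f : P l →ₗ[A] P m) (hf : f ≠ 0)
    (hfhom : IsHomogMap (Pgr l) (Pgr m) j f) :
    (∃ g : P m →ₗ[A] P (pr l),
      IsHomogMap (Pgr m) (Pgr (pr l)) (d (pr l) - j) g ∧ g.comp f = θ l) ∧
    (∃ h : P (pr m) →ₗ[A] P l,
      IsHomogMap (Pgr (pr m)) (Pgr l) (d m - j) h ∧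
      ∀ x : P (pr m), f (h x) = cast (congrArg P (hprinv m hm)) (θ (pr m) x)) :=
  stmt_6_general K A 𝒜 hA Lam L P hsimple hproj hcover d Pgr hP hPsmul pr hpr hprinj hprinv θ hθ
    hθhom l m hl hm j f hf hfhom
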